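/- (Kinser inequalities for subspaces) For n ≥ 4 and subspaces A₁, ..., Aₙ of a finite-dimensional vector space V, I(A₂;A₃) ≤ I(A₁;A₂) + I(A₃;Aₙ|A₁) + Σ_{i=4}^{n} I(A₂;A_{i-1}|A_i), where I(X;Y) = dim X + dim Y - dim(X+Y) and I(X;Y|T) = dim(X+T) + dim(Y+T) - dim(X+Y+T) - dim T. -/

import Mathlib

/-! Put `Z = A₂ ⊓ A₃`, so that `I(A₂;A₃) = dim Z`, and track `h i = H(Z | Aᵢ) = dim (Z ⊔ Aᵢ) - dim Aᵢ`.
Shrinking the first argument of a (conditional) mutual information can only decrease it, which gives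
`dim Z - h 1 ≤ I(A₁;A₂)` (as `Z ≤ A₂`), `h 1 - h n ≤ I(A₃;Aₙ|A₁)` (as `Z ≤ A₃`) and
`h i - h (i-1) ≤ I(A₂;A_{i-1}|Aᵢ)` (as `Z ≤ A₂`). Summing, the right-hand side telescopes to
`dim Z - h 3`, and `h 3 = 0` since `Z ≤ A₃`. -/

open Module

noncomputable def condH {F V : Type*} [Field F] [AddCommGroup V] [Module F V]
    (X Y : Submodule F V) : ℤ :=
  (finrank F ↑(X ⊔ Y) : ℤ) - finrank F ↑Y

noncomputable def mutI {F V : Type*} [Field F] [AddCommGroup V] [Module F V]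
    (X Y : Submodule F V) : ℤ :=
  (finrank F ↑X : ℤ) + finrank F ↑Y - finrank F ↑(X ⊔ Y)

noncomputable def condI {F V : Type*} [Field F] [AddCommGroup V] [Module F V]
    (X Y T : Submodule F V) : ℤ :=
  (finrank F ↑(X ⊔ T) : ℤ) + finrank F ↑(Y ⊔ T) - finrank F ↑(X ⊔ Y ⊔ T) - finrank F ↑T

open Finset

theorem sub_le_sum_Icc_of_sub_le {M : Type*} [AddCommGroup M] [PartialOrder M]
    [IsOrderedAddMonoid M] {f g : ℕ → M} {m n : ℕ} (hmn : m ≤ n)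
    (h : ∀ i ∈ Icc (m + 1) n, f i - f (i - 1) ≤ g i) :
    f n - f m ≤ ∑ i ∈ Icc (m + 1) n, g i := by
  induction n, hmn using Nat.le_induction with
  | base => simp
  | succ k hmk ih =>
    rw [sum_Icc_succ_top (by omega)]
    have hk := h (k + 1) (mem_Icc.2 ⟨by omega, le_rfl⟩)
    have ih := ih fun i hi ↦ h i (mem_Icc.2 ⟨(mem_Icc.1 hi).1, by grind⟩)
    rw [add_tsub_cancel_right] at hk
    calc f (k + 1) - f m = (f k - f m) + (f (k + 1) - f k) := by abel
      _ ≤ _ := add_le_add ih hk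

section Subspaces

variable {F V : Type*} [Field F] [AddCommGroup V] [Module F V]

theorem condH_eq_zero_of_le {Z Y : Submodule F V} (h : Z ≤ Y) : condH Z Y = 0 := by
  rw [condH, sup_eq_right.2 h, sub_self]

variable [FiniteDimensional F V]

theorem mutI_eq_finrank_inf (X Y : Submodule F V) : mutI X Y = finrank F ↑(X ⊓ Y) := by
  have := Submodule.finrank_sup_add_finrank_inf_eq X Y
  unfold mutI
  omega

theorem condI_nonneg (X Y T : Submodule F V) : 0 ≤ condI X Y T := by
  have hsup : (X ⊔ T) ⊔ (Y ⊔ T) = X ⊔ Y ⊔ T := by rw [sup_sup_sup_comm, sup_idem]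
  have hdim := Submodule.finrank_sup_add_finrank_inf_eq (X ⊔ T) (Y ⊔ T)
  have hT : finrank F ↑T ≤ finrank F ↑((X ⊔ T) ⊓ (Y ⊔ T)) :=
    Submodule.finrank_mono (le_inf le_sup_right le_sup_right)
  rw [hsup] at hdim
  unfold condI
  omega

-- `I(X;Y|T) - (H(Z|T) - H(Z|Y)) = I(X;Y|Z ⊔ T) + I(Z;T|Y)` when `Z ≤ X`.
theorem condH_sub_condH_le_condI {Z X : Submodule F V} (hZX : Z ≤ X) (Y T : Submodule F V) :
    condH Z T - condH Z Y ≤ condI X Y T := by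
  have h₁ := condI_nonneg X Y (Z ⊔ T)
  have h₂ := condI_nonneg Z T Y
  have e₁ : X ⊔ (Z ⊔ T) = X ⊔ T := by rw [← sup_assoc, sup_eq_left.2 hZX]
  have e₂ : X ⊔ Y ⊔ (Z ⊔ T) = X ⊔ Y ⊔ T := by
    rw [← sup_assoc, sup_eq_left.2 (hZX.trans le_sup_left)]
  unfold condI condH at *
  rw [e₁, e₂, sup_comm Y] at h₁
  rw [sup_comm T] at h₂
  linarith

-- `I(Y;X) - (dim Z - H(Z|Y)) = I(X;Y|Z)` when `Z ≤ X`.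
theorem finrank_sub_condH_le_mutI {Z X : Submodule F V} (hZX : Z ≤ X) (Y : Submodule F V) :
    (finrank F ↑Z : ℤ) - condH Z Y ≤ mutI Y X := by
  have h := condI_nonneg X Y Z
  have e₁ : X ⊔ Z = X := sup_eq_left.2 hZX
  have e₂ : X ⊔ Y ⊔ Z = Y ⊔ X := by rw [sup_comm X Y, sup_assoc, e₁]
  unfold condI condH mutI at *
  rw [e₁, e₂, sup_comm Y] at h
  linarith

end Subspaces

theorem stmt11 {F V : Type*} [Field F] [AddCommGroup V] [Module F V] [FiniteDimensional F V]
    (n : ℕ) (hn : 4 ≤ n) (A : ℕ → Submodule F V) :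
    mutI (A 2) (A 3) ≤
      mutI (A 1) (A 2) + condI (A 3) (A n) (A 1) +
        ∑ i ∈ Finset.Icc 4 n, condI (A 2) (A (i - 1)) (A i) := by
  set Z := A 2 ⊓ A 3
  have hZ₂ : Z ≤ A 2 := inf_le_left
  have hZ₃ : Z ≤ A 3 := inf_le_right
  have hfirst := finrank_sub_condH_le_mutI hZ₂ (A 1)
  have hsecond := condH_sub_condH_le_condI hZ₃ (A n) (A 1)
  have hchain : condH Z (A n) - condH Z (A 3) ≤
      ∑ i ∈ Finset.Icc 4 n, condI (A 2) (A (i - 1)) (A i) :=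
    sub_le_sum_Icc_of_sub_le (f := fun i ↦ condH Z (A i)) (by omega)
      fun i _ ↦ condH_sub_condH_le_condI hZ₂ (A (i - 1)) (A i)
  rw [condH_eq_zero_of_le hZ₃] at hchain
  rw [mutI_eq_finrank_inf]
  linarith
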